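/- For all nonnegative integers k₀, k₁, k₂ with k₀+k₁+k₂ = k: x_{α₂}(−1)^{k₀+k₁+1} · x_{α₁}(−1)^{k₁} · x_{α₁+α₂}(−1)^{k₂} ∈ I_{k₂Λ₀+k₀Λ₁+k₁Λ₂}. -/

import Mathlib

/- Setup: the nilpotent subalgebra 𝔫 ⊂ 𝔰𝔩(3,ℂ) spanned by E₁₂, E₂₃, E₁₃, its loop
algebra 𝔫̄ = 𝔫 ⊗ ℂ[t,t⁻¹], and the universal enveloping algebra U(𝔫̄). -/

noncomputable section
open scoped TensorProduct

namespace PrincipalSubspaceSL3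

attribute [local instance 100] LieRing.ofAssociativeRing

/-- 3×3 complex matrices. -/
abbrev gl3 : Type := Matrix (Fin 3) (Fin 3) ℂ

/-- The root vectors: `Egen 0 = x_{α₁} = E₁₂`, `Egen 1 = x_{α₂} = E₂₃`,
`Egen 2 = x_{α₁+α₂} = E₁₃`. -/
def Egen : Fin 3 → gl3
  | 0 => Matrix.single 0 1 1
  | 1 => Matrix.single 1 2 1
  | 2 => Matrix.single 0 2 1

lemma egen_lie_mem :
    ∀ x ∈ Submodule.span ℂ (Set.range Egen), ∀ y ∈ Submodule.span ℂ (Set.range Egen),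
      ⁅x, y⁆ ∈ Submodule.span ℂ (Set.range Egen) := by
  have key : ∀ a b : Fin 3, ⁅Egen a, Egen b⁆ ∈ Submodule.span ℂ (Set.range Egen) := by
    intro a b
    fin_cases a <;> fin_cases b <;>
      simp only [Egen, Ring.lie_def, Matrix.single_mul_single_same,
        Matrix.single_mul_single_of_ne, Fin.reduceEq, ne_eq, not_false_eq_true,
        one_mul, sub_zero, zero_sub, sub_self] <;>
      first
        | exact Submodule.zero_mem _
        | exact Submodule.subset_span ⟨2, rfl⟩
        | exact Submodule.neg_mem _ (Submodule.subset_span ⟨2, rfl⟩)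
  intro x hx
  induction hx using Submodule.span_induction with
  | mem x hxs =>
      obtain ⟨a, rfl⟩ := hxs
      intro y hy
      induction hy using Submodule.span_induction with
      | mem y hys => obtain ⟨b, rfl⟩ := hys; exact key a b
      | zero => simp
      | add y z hy hz hy' hz' => rw [lie_add]; exact Submodule.add_mem _ hy' hz'
      | smul c y hy hy' => rw [lie_smul]; exact Submodule.smul_mem _ _ hy'
  | zero => intro y hy; simp
  | add x z hx hz hx' hz' =>
      intro y hy; rw [add_lie]; exact Submodule.add_mem _ (hx' y hy) (hz' y hy)
  | smul c x hx hx' =>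
      intro y hy; rw [smul_lie]; exact Submodule.smul_mem _ _ (hx' y hy)

/-- The nilpotent Lie subalgebra 𝔫 = ℂE₁₂ ⊕ ℂE₂₃ ⊕ ℂE₁₃ of 𝔰𝔩(3,ℂ). -/
def nn : LieSubalgebra ℂ gl3 :=
  { Submodule.span ℂ (Set.range Egen) with
    lie_mem' := fun {x y} hx hy => egen_lie_mem x hx y hy }

/-- Laurent polynomials ℂ[t, t⁻¹]. -/
abbrev A : Type := LaurentPolynomial ℂ

/-- The loop algebra 𝔫̄ = 𝔫 ⊗ ℂ[t,t⁻¹]. -/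
abbrev nbar : Type := A ⊗[ℂ] nn

set_option synthInstance.maxHeartbeats 1000000 in
instance : LieAlgebra ℂ nbar where
  lie_smul c x y := by
    have h := lie_smul (algebraMap ℂ A c) x y
    rwa [algebraMap_smul, algebraMap_smul] at h

/-- The root vectors as elements of 𝔫. -/
def en (i : Fin 3) : nn := ⟨Egen i, Submodule.subset_span ⟨i, rfl⟩⟩

/-- `nx i m` is the element x_{α}(m) = x_α ⊗ tᵐ of 𝔫̄, where α is α₁, α₂, α₁+α₂
according to i = 0, 1, 2. -/
def nx (i : Fin 3) (m : ℤ) : nbar := LaurentPolynomial.T m ⊗ₜ[ℂ] en i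

/-- The universal enveloping algebra U(𝔫̄). -/
abbrev U : Type := UniversalEnvelopingAlgebra ℂ nbar

/-- `xg i m` is the element x_α(m) regarded inside U(𝔫̄). -/
def xg (i : Fin 3) (m : ℤ) : U := UniversalEnvelopingAlgebra.ι ℂ (nx i m)

/-- `Rtr k i t` = R^i_{-1,t} : the sum of x_{α_i}(m₁)⋯x_{α_i}(m_{k+1}) over all integer
tuples with every m_j ≤ -1 and m₁+⋯+m_{k+1} = -t (parametrized by m_j = -1 - n_j with
n : Fin (k+1) → ℕ, ∑ n = t - (k+1)).  Here i : Fin 2 refers to the simple root α_{i+1}. -/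
def Rtr (k : ℕ) (i : Fin 2) (t : ℤ) : U :=
  ∑ f ∈ Finset.Nat.antidiagonalTuple (k + 1) (t - (k + 1)).toNat,
    (List.ofFn fun j : Fin (k + 1) => xg i.castSucc (-1 - (f j : ℤ))).prod

/-- The left ideal J = Σ_{i,t≥k+1} U(𝔫̄)·R^i_{-1,t}. -/
def Jid (k : ℕ) : Submodule U U :=
  Submodule.span U {u : U | ∃ i : Fin 2, ∃ t : ℤ, (k : ℤ) + 1 ≤ t ∧ u = Rtr k i t}

/-- The left ideal U(𝔫̄)·𝔫̄₊, generated by the x_α(m) with m ≥ 0. -/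
def nplusIdeal : Submodule U U :=
  Submodule.span U {u : U | ∃ i : Fin 3, ∃ m : ℤ, 0 ≤ m ∧ u = xg i m}

/-- The left ideal I_{kΛ₀} = J + U(𝔫̄)·𝔫̄₊. -/
def IkL0 (k : ℕ) : Submodule U U := Jid k ⊔ nplusIdeal

/-- The left ideal I_{k₀Λ₀+k₁Λ₁+k₂Λ₂} = I_{kΛ₀} + U·x_{α₁}(-1)^{k₀+k₂+1}
+ U·x_{α₂}(-1)^{k₀+k₁+1} + U·x_{α₁+α₂}(-1)^{k₀+1} (with k = k₀+k₁+k₂). -/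
def Iwt (k k0 k1 k2 : ℕ) : Submodule U U :=
  IkL0 k ⊔ Submodule.span U {xg 0 (-1) ^ (k0 + k2 + 1)}
    ⊔ Submodule.span U {xg 1 (-1) ^ (k0 + k1 + 1)}
    ⊔ Submodule.span U {xg 2 (-1) ^ (k0 + 1)}

/-! Write `a = x_{α₂}(-1)`, `b = x_{α₁}(-1)`, `c = x_{α₁+α₂}(-1)`; the `x_{α₁+α₂}(m)` are central.
Since `x_{α₁}(0)` lies in the left ideal and `[x_{α₁}(0), a] = c`, taking `k₂` commutators with
`x_{α₁}(0)` turns the generator `a ^ (k₂ + k₀ + 1)` into a nonzero multiple of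
`c ^ k₂ a ^ (k₀ + 1)`. Then `c ^ k₂ a ^ (k₀ + k₁ + 1) b ^ k₁` lies in the ideal: moving the `b`'s
to the left through the `a`'s, each `a` that is lost becomes the central `[b, a] = x_{α₁+α₂}(-2)`,
and since there are only `k₁` of them a factor `a ^ (k₀ + 1)` stays on the right. -/

section LeftIdeal

variable {R : Type*} [Ring R]

theorem _root_.mul_pow_succ_sub_pow_succ_mul {x y w : R} (h : x * y - y * x = w)
    (hwy : Commute w y) (n : ℕ) :
    x * y ^ (n + 1) - y ^ (n + 1) * x = (n + 1) • (w * y ^ n) := by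
  induction n with
  | zero => simpa using h
  | succ n ih =>
    calc x * y ^ (n + 2) - y ^ (n + 2) * x
        = (x * y ^ (n + 1) - y ^ (n + 1) * x) * y + y ^ (n + 1) * (x * y - y * x) := by
          simp only [pow_succ, mul_sub, sub_mul, mul_assoc]; abel
      _ = (n + 2) • (w * y ^ (n + 1)) := by
          rw [ih, h, smul_mul_assoc, mul_assoc, ← pow_succ, ← (hwy.pow_right _).eq,
            ← succ_nsmul]

theorem _root_.Submodule.mem_of_nsmul_mem {K : Type*} [Field K] [CharZero K] [Algebra K R]
    {I : Submodule R R} {x : R} {n : ℕ} (hn : n ≠ 0) (h : n • x ∈ I) : x ∈ I := by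
  rw [← Nat.cast_smul_eq_nsmul K] at h
  exact (Submodule.smul_mem_iff (I.restrictScalars K) (Nat.cast_ne_zero.mpr hn)).mp h

theorem _root_.Submodule.pow_mul_pow_mem_of_commutator {K : Type*} [Field K] [CharZero K]
    [Algebra K R] {I : Submodule R R} {x y w : R} (hx : x ∈ I) (h : x * y - y * x = w)
    (hwx : Commute w x) (hwy : Commute w y) {n r : ℕ} (hy : y ^ (n + r) ∈ I) :
    w ^ r * y ^ n ∈ I := by
  induction r generalizing n with
  | zero => simpa using hy
  | succ r ih =>
    have hv : w ^ r * y ^ (n + 1) ∈ I := ih (by rwa [add_right_comm, add_assoc])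
    have hbracket : x * (w ^ r * y ^ (n + 1)) - w ^ r * y ^ (n + 1) * x
        = (n + 1) • (w ^ (r + 1) * y ^ n) := by
      rw [← (hwx.pow_left r).left_comm, mul_assoc, ← mul_sub,
        mul_pow_succ_sub_pow_succ_mul h hwy, mul_smul_comm, ← mul_assoc, ← pow_succ]
    refine Submodule.mem_of_nsmul_mem (K := K) (n := n + 1) n.succ_ne_zero ?_
    rw [← hbracket]
    exact sub_mem (I.smul_mem x hv) (I.smul_mem _ hx)

theorem _root_.Submodule.mul_pow_mul_pow_mem {I : Submodule R R} {a b z : R}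
    (h : b * a - a * b = z) (hza : Commute z a) (hzb : Commute z b) {m : ℕ} (n s : ℕ) {w : R}
    (hwa : Commute w a) (hwb : Commute w b) (hwz : Commute w z) (hw : w * a ^ m ∈ I) :
    w * a ^ (m + n + s) * b ^ n ∈ I := by
  induction n generalizing s w with
  | zero =>
    rw [pow_zero, mul_one, add_zero, add_comm, pow_add, ← mul_assoc,
      (hwa.pow_right s).eq, mul_assoc]
    exact I.smul_mem _ hw
  | succ n ih =>
    have hv := ih (s + 1) hwa hwb hwz hw
    have hzv := ih s (hza.mul_left hwa) (hzb.mul_left hwb)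
      ((Commute.refl z).mul_left hwz) (by rw [mul_assoc]; exact I.smul_mem z hw)
    have hmove : a ^ (m + n + s + 1) * b
        = b * a ^ (m + n + s + 1) - (m + n + s + 1) • (z * a ^ (m + n + s)) := by
      rw [← mul_pow_succ_sub_pow_succ_mul h hza]; abel
    have hsplit : w * a ^ (m + (n + 1) + s) * b ^ (n + 1)
        = b * (w * a ^ (m + n + (s + 1)) * b ^ n)
          - (m + n + s + 1) • (z * w * a ^ (m + n + s) * b ^ n) := by
      rw [show m + (n + 1) + s = m + n + s + 1 by omega, pow_succ' b, mul_assoc,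
        ← mul_assoc (a ^ _), hmove, sub_mul, mul_sub, smul_mul_assoc, mul_smul_comm,
        ← add_assoc]
      simp only [mul_assoc, hwb.left_comm, hwz.left_comm]
    rw [hsplit]
    exact sub_mem (I.smul_mem b hv) (I.nsmul_mem hzv _)

end LeftIdeal

lemma en_zero_lie_en_one : ⁅en 0, en 1⁆ = en 2 := by
  apply Subtype.ext
  change ⁅Egen 0, Egen 1⁆ = Egen 2
  simp [Egen, Ring.lie_def, Matrix.single_mul_single_of_ne]

lemma en_two_lie (i : Fin 3) : ⁅en 2, en i⁆ = 0 := by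
  apply Subtype.ext
  change ⁅Egen 2, Egen i⁆ = 0
  fin_cases i <;> simp [Egen, Ring.lie_def, Matrix.single_mul_single_of_ne]

lemma xg_mul_sub_mul (i j : Fin 3) (m p : ℤ) :
    xg i m * xg j p - xg j p * xg i m
      = UniversalEnvelopingAlgebra.ι ℂ
          (LaurentPolynomial.T (m + p) ⊗ₜ[ℂ] ⁅en i, en j⁆ : nbar) := by
  rw [xg, xg, ← Ring.lie_def, ← LieHom.map_lie, nx, nx,
    LieAlgebra.ExtendScalars.bracket_tmul, LaurentPolynomial.T_add]

lemma xg_zero_mul_sub_mul_xg_one (m p : ℤ) :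
    xg 0 m * xg 1 p - xg 1 p * xg 0 m = xg 2 (m + p) := by
  rw [xg_mul_sub_mul, en_zero_lie_en_one, xg, nx]

lemma commute_xg_two (i : Fin 3) (m p : ℤ) : Commute (xg 2 m) (xg i p) :=
  sub_eq_zero.mp <| by rw [xg_mul_sub_mul, en_two_lie, TensorProduct.tmul_zero, map_zero]

lemma xg_zero_zero_mem_Iwt (k k0 k1 k2 : ℕ) : xg 0 0 ∈ Iwt k k0 k1 k2 :=
  Submodule.mem_sup_left <| Submodule.mem_sup_left <| Submodule.mem_sup_left <|
    Submodule.mem_sup_right <| Submodule.subset_span ⟨0, 0, le_rfl, rfl⟩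

lemma xg_one_pow_mem_Iwt (k k0 k1 k2 : ℕ) : xg 1 (-1) ^ (k0 + k1 + 1) ∈ Iwt k k0 k1 k2 :=
  Submodule.mem_sup_left <| Submodule.mem_sup_right <| Submodule.mem_span_singleton_self _

theorem statement14_general (k : ℕ) (k0 k1 k2 : ℕ) :
    xg 1 (-1) ^ (k0 + k1 + 1) * xg 0 (-1) ^ k1 * xg 2 (-1) ^ k2 ∈ Iwt k k2 k0 k1 := by
  have hc : xg 2 (-1) ^ k2 * xg 1 (-1) ^ (k0 + 1) ∈ Iwt k k2 k0 k1 :=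
    Submodule.pow_mul_pow_mem_of_commutator (K := ℂ) (xg_zero_zero_mem_Iwt k k2 k0 k1)
      (by simpa using xg_zero_mul_sub_mul_xg_one 0 (-1)) (commute_xg_two ..)
      (commute_xg_two ..)
      (by rw [show k0 + 1 + k2 = k2 + k0 + 1 by omega]; exact xg_one_pow_mem_Iwt k k2 k0 k1)
  have h := Submodule.mul_pow_mul_pow_mem (xg_zero_mul_sub_mul_xg_one (-1) (-1))
    (commute_xg_two ..) (commute_xg_two ..) k1 0
    ((commute_xg_two ..).pow_left _) ((commute_xg_two ..).pow_left _)
    ((commute_xg_two ..).pow_left _) hc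
  rw [show k0 + 1 + k1 + 0 = k0 + k1 + 1 by omega, mul_assoc] at h
  rwa [← (((commute_xg_two 1 ..).pow_right _).mul_right
    ((commute_xg_two 0 ..).pow_right _)).pow_left k2 |>.eq]

/-- for k₀+k₁+k₂ = k,
x_{α₂}(−1)^{k₀+k₁+1}·x_{α₁}(−1)^{k₁}·x_{α₁+α₂}(−1)^{k₂} ∈ I_{k₂Λ₀+k₀Λ₁+k₁Λ₂}. -/
theorem statement14 (k : ℕ) (hk : 0 < k) (k0 k1 k2 : ℕ) (hsum : k0 + k1 + k2 = k) :
    xg 1 (-1) ^ (k0 + k1 + 1) * xg 0 (-1) ^ k1 * xg 2 (-1) ^ k2 ∈ Iwt k k2 k0 k1 :=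
  statement14_general k k0 k1 k2

end PrincipalSubspaceSL3
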